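/- Let G=(V,E) be a weighted graph with boundary ∂=A⊔B⊔C and fix integers n≥2 and even m≥2. For every q:V→P_{2n} with q≡q_A on A, q≡q_B on B, q≡id on C, one has Q(q) ≥ B(b∘q), where (b∘q)(v)=b(q(v)) is the induced Boolean configuration. Consequently Q ≥ B. -/

import Mathlib

open scoped Classical

noncomputable section

namespace RTN

/-! ## Set partitions -/

/-- Number of blocks of a set partition (as an integer). -/
def nb {α : Type*} (p : Setoid α) : ℤ := Nat.card (Quotient p)

/-- The partition distance `d(p,q) = #(p) + #(q) - 2 #(p ⊔ q)`. -/
def pdist {α : Type*} (p q : Setoid α) : ℤ := nb p + nb q - 2 * nb (p ⊔ q)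

lemma pdist_comm {α : Type*} (p q : Setoid α) : pdist p q = pdist q p := by
  unfold pdist
  rw [sup_comm p q]
  ring

/-- `k` is a singlet (block of size one) of the partition `p`. -/
def IsSinglet {α : Type*} (p : Setoid α) (k : α) : Prop := ∀ y, p.r k y → y = k

/-- The number of singlets `#₁(p)` of a partition. -/
def nS {α : Type*} (p : Setoid α) : ℤ := Nat.card {k : α // IsSinglet p k}

/-- The singlet distance `d₁(s₁,s₂) = #₁(s₁) + #₁(s₂) - 2 #₁(s₁ ⊔ s₂)`. -/
def sdist {α : Type*} (s₁ s₂ : Setoid α) : ℤ := nS s₁ + nS s₂ - 2 * nS (s₁ ⊔ s₂)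

/-- The singlet pattern `s(p)`: the coarsest partition whose singlets are exactly
those of `p` (all non-singlet elements lie in one block). -/
def spat {α : Type*} (p : Setoid α) : Setoid α where
  r x y := x = y ∨ (¬ IsSinglet p x ∧ ¬ IsSinglet p y)
  iseqv := by
    refine ⟨fun x => Or.inl rfl, ?_, ?_⟩
    · intro x y h
      rcases h with rfl | ⟨hx, hy⟩
      · exact Or.inl rfl
      · exact Or.inr ⟨hy, hx⟩
    · intro x y z h1 h2
      rcases h1 with rfl | ⟨hx, hy⟩
      · exact h2
      · rcases h2 with rfl | ⟨_, hz⟩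
        · exact Or.inr ⟨hx, hy⟩
        · exact Or.inr ⟨hx, hz⟩

/-- The bit `b^k(p)`: `0` if `p` has a singlet at `k`, else `1`. -/
def bbit {α : Type*} (p : Setoid α) (k : α) : ℤ := if IsSinglet p k then 0 else 1

/-- The size of the block of `p` containing `x`. -/
def blockSize {α : Type*} (p : Setoid α) (x : α) : ℕ := Nat.card {y : α // p.r x y}

noncomputable instance {α : Type*} [Finite α] (s : Setoid α) : Fintype (Quotient s) :=
  Fintype.ofFinite _

/-! ## Permutations -/

/-- The partition of `α` into orbits (cycles) of a permutation. -/
def orbitSetoid {α : Type*} (g : Equiv.Perm α) : Setoid α where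
  r x y := ∃ k : ℤ, (g ^ k) x = y
  iseqv := by
    refine ⟨fun x => ⟨0, by simp⟩, ?_, ?_⟩
    · rintro x y ⟨k, rfl⟩
      exact ⟨-k, by simp [← Equiv.Perm.mul_apply, ← zpow_add]⟩
    · rintro x y z ⟨k, rfl⟩ ⟨l, rfl⟩
      exact ⟨l + k, by rw [zpow_add, Equiv.Perm.mul_apply]⟩

/-- The number of cycles `#(g)` of a permutation (fixed points included). -/
def ncyc {α : Type*} (g : Equiv.Perm α) : ℤ := nb (orbitSetoid g)

/-- The Cayley distance `d(g,h) = N - #(g h⁻¹)`. -/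
def cayley {α : Type*} [Fintype α] (g h : Equiv.Perm α) : ℤ :=
  (Fintype.card α : ℤ) - ncyc (g * h⁻¹)

lemma orbitSetoid_inv {α : Type*} (g : Equiv.Perm α) : orbitSetoid g⁻¹ = orbitSetoid g := by
  apply Setoid.ext
  intro x y
  constructor
  · rintro ⟨k, hk⟩
    exact ⟨-k, by rw [← inv_zpow']; exact hk⟩
  · rintro ⟨k, hk⟩
    exact ⟨-k, by rw [inv_zpow', neg_neg]; exact hk⟩

lemma cayley_comm {α : Type*} [Fintype α] (g h : Equiv.Perm α) : cayley g h = cayley h g := by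
  unfold cayley ncyc
  rw [show h * g⁻¹ = (g * h⁻¹)⁻¹ by rw [mul_inv_rev, inv_inv], orbitSetoid_inv]

/-- Coarse graining of a partition `p` by the blocks of `P(g₀)`: the partition of the set
of blocks of `P(g₀)` induced by `p ⊔ P(g₀)`. -/
def coarse {α : Type*} (g₀ : Equiv.Perm α) (p : Setoid α) :
    Setoid (Quotient (orbitSetoid g₀)) where
  r u v := ∃ x y : α, Quotient.mk (orbitSetoid g₀) x = u ∧ Quotient.mk (orbitSetoid g₀) y = v ∧
    (p ⊔ orbitSetoid g₀).r x y
  iseqv := by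
    refine ⟨?_, ?_, ?_⟩
    · intro u
      obtain ⟨x, rfl⟩ := Quotient.exists_rep u
      exact ⟨x, x, rfl, rfl, (p ⊔ orbitSetoid g₀).iseqv.refl x⟩
    · rintro u v ⟨x, y, hx, hy, hxy⟩
      exact ⟨y, x, hy, hx, (p ⊔ orbitSetoid g₀).iseqv.symm hxy⟩
    · rintro u v w ⟨x, y, hx, hy, hxy⟩ ⟨y', z, hy', hz, hyz⟩
      refine ⟨x, z, hx, hz, ?_⟩
      have h1 : (orbitSetoid g₀).r y y' := Quotient.exact (hy.trans hy'.symm)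
      have h2 : (p ⊔ orbitSetoid g₀).r y y' :=
        (le_sup_right : orbitSetoid g₀ ≤ p ⊔ orbitSetoid g₀) h1
      exact (p ⊔ orbitSetoid g₀).iseqv.trans hxy
        ((p ⊔ orbitSetoid g₀).iseqv.trans h2 hyz)

/-- The coarse graining `q_{g₀}(g) ∈ P_{#(g₀)}` of a permutation `g`. -/
def qc {α : Type*} (g₀ g : Equiv.Perm α) : Setoid (Quotient (orbitSetoid g₀)) :=
  coarse g₀ (orbitSetoid g)

/-! ## Standard reflected-entropy boundary elements -/

/-- `g_B`, the product of `n` disjoint `m`-cycles `(k,ℓ) ↦ (k,ℓ+1)`. -/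
def gB (n m : ℕ) : Equiv.Perm (Fin n × Fin m) :=
  Equiv.prodCongr (Equiv.refl (Fin n)) (finRotate m)

/-- `γ`, cyclically shifting `k ↦ k+1` on the elements with `ℓ` in the lower half,
fixing the rest. -/
def gamma (n m : ℕ) : Equiv.Perm (Fin n × Fin m) where
  toFun x := if m / 2 ≤ (x.2 : ℕ) then (finRotate n x.1, x.2) else x
  invFun x := if m / 2 ≤ (x.2 : ℕ) then ((finRotate n).symm x.1, x.2) else x
  left_inv := by
    intro x
    by_cases h : m / 2 ≤ (x.2 : ℕ) <;> simp [h, -finRotate_apply, -finRotate_symm_apply]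
  right_inv := by
    intro x
    by_cases h : m / 2 ≤ (x.2 : ℕ) <;> simp [h, -finRotate_apply, -finRotate_symm_apply]

/-- `g_A = γ⁻¹ g_B γ`. -/
def gA (n m : ℕ) : Equiv.Perm (Fin n × Fin m) :=
  (gamma n m)⁻¹ * gB n m * gamma n m

/-- For even `m`, `Fin m` splits into an upper and a lower half. -/
def halfEquiv (m : ℕ) (hm : m % 2 = 0) : Fin 2 × Fin (m / 2) ≃ Fin m :=
  finProdFinEquiv.trans (finCongr (by omega))

/-- `X`, the product of the `2n` disjoint `(m/2)`-cycles cyclically permuting the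
upper and the lower half of each block `k`. -/
def Xel (n m : ℕ) (hm : m % 2 = 0) : Equiv.Perm (Fin n × Fin m) :=
  Equiv.prodCongr (Equiv.refl (Fin n))
    ((halfEquiv m hm).permCongr
      (Equiv.prodCongr (Equiv.refl (Fin 2)) (finRotate (m / 2))))

/-- The set of blocks of `P(X)`; it has `2n` elements. -/
abbrev BX (n m : ℕ) (hm : m % 2 = 0) := Quotient (orbitSetoid (Xel n m hm))

/-- `q_A = q_X(g_A) ∈ P_{2n}`. -/
def qAel (n m : ℕ) (hm : m % 2 = 0) : Setoid (BX n m hm) :=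
  qc (Xel n m hm) (gA n m)

/-- `q_B = q_X(g_B) ∈ P_{2n}`. -/
def qBel (n m : ℕ) (hm : m % 2 = 0) : Setoid (BX n m hm) :=
  qc (Xel n m hm) (gB n m)

/-! ## Doubled elements (two copies) -/

/-- Two copies of the index set `{1,…,mn}`. -/
abbrev DIdx (n m : ℕ) := (Fin n × Fin m) ⊕ (Fin n × Fin m)

/-- `g̃_A = g_A ⊕ g_A`. -/
def gAt (n m : ℕ) : Equiv.Perm (DIdx n m) := Equiv.sumCongr (gA n m) (gA n m)

/-- `g̃_B = g_B ⊕ g_B`. -/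
def gBt (n m : ℕ) : Equiv.Perm (DIdx n m) := Equiv.sumCongr (gB n m) (gB n m)

/-- `X̃ = X ⊕ X`. -/
def Xt (n m : ℕ) (hm : m % 2 = 0) : Equiv.Perm (DIdx n m) :=
  Equiv.sumCongr (Xel n m hm) (Xel n m hm)

/-- The set of blocks of `P(X̃)`; it has `4n` elements. -/
abbrev BXt (n m : ℕ) (hm : m % 2 = 0) := Quotient (orbitSetoid (Xt n m hm))

/-- `q̃_A = q_{X̃}(g̃_A) ∈ P_{4n}`. -/
def qAt (n m : ℕ) (hm : m % 2 = 0) : Setoid (BXt n m hm) :=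
  qc (Xt n m hm) (gAt n m)

/-- `q̃_B = q_{X̃}(g̃_B) ∈ P_{4n}`. -/
def qBt (n m : ℕ) (hm : m % 2 = 0) : Setoid (BXt n m hm) :=
  qc (Xt n m hm) (gBt n m)

/-- A block of `P(X̃)` lies in the first copy. -/
def inCopy1 {n m : ℕ} {hm : m % 2 = 0} (u : BXt n m hm) : Prop :=
  ∃ x, Quotient.mk (orbitSetoid (Xt n m hm)) (Sum.inl x) = u

/-- `#₁⁽¹⁾(q)`: the number of singlets of `q` among the first-copy positions. -/
def nS1 {n m : ℕ} {hm : m % 2 = 0} (q : Setoid (BXt n m hm)) : ℤ :=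
  Nat.card {u : BXt n m hm // IsSinglet q u ∧ inCopy1 u}

/-- `#₁⁽²⁾(q)`: the number of singlets of `q` among the second-copy positions. -/
def nS2 {n m : ℕ} {hm : m % 2 = 0} (q : Setoid (BXt n m hm)) : ℤ :=
  Nat.card {u : BXt n m hm // IsSinglet q u ∧ ¬ inCopy1 u}

/-- `τ ∈ P_{4n}`, the two-block partition separating the two copies. -/
def tau (n m : ℕ) (hm : m % 2 = 0) : Setoid (BXt n m hm) where
  r u v := inCopy1 u ↔ inCopy1 v
  iseqv := ⟨fun _ => Iff.rfl, Iff.symm, Iff.trans⟩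

/-! ## Graphs, cuts and optimization programs -/

variable {V : Type*}

/-- Sum of an edge function along (the edge list of) a walk, with multiplicity. -/
def wkSum {β : Type*} [AddCommMonoid β] {G : SimpleGraph V} {x y : V}
    (f : Sym2 V → β) (L : G.Walk x y) : β :=
  (L.edges.map f).sum

variable [Fintype V]

/-- Sum of an edge weight function over a set of edges. -/
def wsum (f : Sym2 V → ℝ) (S : Set (Sym2 V)) : ℝ :=
  ∑ e ∈ Finset.univ.filter (· ∈ S), f e

/-- The cut surface `μ(r)`: edges of `G` with one endpoint in `r`, the other outside. -/
def mu (G : SimpleGraph V) (r : Set V) : Set (Sym2 V) :=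
  {e | e ∈ G.edgeSet ∧ ∃ x y, e = s(x, y) ∧ x ∈ r ∧ y ∉ r}

/-- `μ(r₁:r₂)`: edges of `G` with an endpoint in `r₁` and an endpoint in `r₂`. -/
def mu2 (G : SimpleGraph V) (r₁ r₂ : Set V) : Set (Sym2 V) :=
  {e | e ∈ G.edgeSet ∧ ∃ x y, e = s(x, y) ∧ x ∈ r₁ ∧ y ∈ r₂}

/-- `r` is a cut for `X : Y`. -/
def IsCut (X Y r : Set V) : Prop := X ⊆ r ∧ Y ⊆ rᶜ

/-- The minimal cut area `𝒜(X:Y)`. -/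
def minCut (G : SimpleGraph V) (w : Sym2 V → ℝ) (X Y : Set V) : ℝ :=
  sInf {a | ∃ r : Set V, IsCut X Y r ∧ a = wsum w (mu G r)}

/-- `(α,β,γ)` is a triway cut for `(A,B,C)`. -/
def IsTriway (A B C α β γ : Set V) : Prop :=
  α ∪ β ∪ γ = Set.univ ∧ Disjoint α β ∧ Disjoint β γ ∧ Disjoint α γ ∧
    A ⊆ α ∧ B ⊆ β ∧ C ⊆ γ

/-- The area of a triway cut with tensions `(t_{A:B}, t_{B:C}, t_{C:A})`. -/
def triArea (G : SimpleGraph V) (w : Sym2 V → ℝ) (tAB tBC tCA : ℝ)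
    (α β γ : Set V) : ℝ :=
  tAB * wsum w (mu2 G α β) + tBC * wsum w (mu2 G β γ) + tCA * wsum w (mu2 G γ α)

/-- The minimal triway cut area `𝒜_t(A:B:C)`. -/
def triCut (G : SimpleGraph V) (w : Sym2 V → ℝ) (tAB tBC tCA : ℝ)
    (A B C : Set V) : ℝ :=
  sInf {a | ∃ α β γ : Set V, IsTriway A B C α β γ ∧ a = triArea G w tAB tBC tCA α β γ}

/-- Boundary data: `∂ = A ⊔ B ⊔ C` (pairwise disjoint). -/
def Bdy (A B C : Set V) : Prop := Disjoint A B ∧ Disjoint A C ∧ Disjoint B C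

/-! ### The permutation optimization `R` -/

/-- The symmetric edge function induced by the Cayley distance of a vertex
configuration of permutations. -/
def permE {ι : Type*} [Fintype ι] (g : V → Equiv.Perm ι) : Sym2 V → ℝ :=
  Sym2.lift ⟨fun x y => (cayley (g x) (g y) : ℝ),
    fun x y => congrArg Int.cast (cayley_comm (g x) (g y))⟩

/-- The free energy `R(g) = Σ_e w(e) d(g(x),g(y))`. -/
def Renergy {ι : Type*} [Fintype ι] (G : SimpleGraph V) (w : Sym2 V → ℝ)
    (g : V → Equiv.Perm ι) : ℝ :=
  wsum (fun e => w e * permE g e) G.edgeSet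

/-- The optimal value `R` of the permutation optimization. -/
def Rval {ι : Type*} [Fintype ι] (G : SimpleGraph V) (w : Sym2 V → ℝ)
    (A B C : Set V) (g₁ g₂ : Equiv.Perm ι) : ℝ :=
  sInf {a | ∃ g : V → Equiv.Perm ι,
    (∀ v ∈ A, g v = g₁) ∧ (∀ v ∈ B, g v = g₂) ∧ (∀ v ∈ C, g v = 1) ∧
    a = Renergy G w g}

/-! ### The set-partition optimization `Q` -/

/-- The symmetric integer edge function induced by the partition distance of a vertex
configuration of partitions. -/
def partEZ {κ : Type*} (q : V → Setoid κ) : Sym2 V → ℤ :=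
  Sym2.lift ⟨fun x y => pdist (q x) (q y), fun x y => pdist_comm (q x) (q y)⟩

/-- The free energy `Q(q) = Σ_e w(e) d(q(x),q(y))`. -/
def Qenergy {κ : Type*} (G : SimpleGraph V) (w : Sym2 V → ℝ)
    (q : V → Setoid κ) : ℝ :=
  wsum (fun e => w e * (partEZ q e : ℝ)) G.edgeSet

/-- The optimal value `Q` of the set-partition optimization. -/
def Qval {κ : Type*} (G : SimpleGraph V) (w : Sym2 V → ℝ)
    (A B C : Set V) (q₁ q₂ : Setoid κ) : ℝ :=
  sInf {a | ∃ q : V → Setoid κ,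
    (∀ v ∈ A, q v = q₁) ∧ (∀ v ∈ B, q v = q₂) ∧ (∀ v ∈ C, q v = ⊥) ∧
    a = Qenergy G w q}

/-! ### The Boolean optimization `B` -/

/-- The Hamming distance between two bit strings. -/
def ham {κ : Type*} [Fintype κ] (b₁ b₂ : κ → Bool) : ℤ :=
  ∑ k : κ, if b₁ k = b₂ k then 0 else 1

/-- The bit string `b(q)` of a partition: `false` exactly at singlets. -/
def bvec {κ : Type*} (p : Setoid κ) : κ → Bool :=
  fun u => if IsSinglet p u then false else true

/-- Feasibility of `r` for the Boolean program at configuration `b`. -/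
def Bfeas {κ : Type*} [Fintype κ] (G : SimpleGraph V) (A B : Set V) (n : ℕ)
    (b : V → κ → Bool) (r : Sym2 V → ℕ) : Prop :=
  (∀ x ∈ A, ∀ y ∈ B, ∀ L : G.Walk x y,
    2 ∣ wkSum (fun e => (r e : ℤ)) L ∧
    wkSum (fun e => (r e : ℤ)) L ≥
      2 * ((n : ℤ) - if ∀ v ∈ L.support, ∀ k, b v k = true then 1 else 0)) ∧
  (∀ x y : V, G.Adj x y → (r s(x, y) : ℤ) ≥ ⌈(ham (b x) (b y) : ℚ) / 2⌉)

/-- The inner Boolean optimum `B(b)` at a fixed Boolean configuration `b`. -/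
def BvalAt {κ : Type*} [Fintype κ] (G : SimpleGraph V) (w : Sym2 V → ℝ)
    (A B : Set V) (n : ℕ) (b : V → κ → Bool) : ℝ :=
  sInf {a | ∃ r : Sym2 V → ℕ, Bfeas G A B n b r ∧
    a = wsum (fun e => w e * (r e : ℝ)) G.edgeSet}

/-- The optimal value `B` of the Boolean optimization. -/
def Bval (κ : Type*) [Fintype κ] (G : SimpleGraph V) (w : Sym2 V → ℝ)
    (A B C : Set V) (n : ℕ) : ℝ :=
  sInf {a | ∃ b : V → κ → Bool,
    (∀ v ∈ A ∪ B, ∀ k, b v k = true) ∧ (∀ v ∈ C, ∀ k, b v k = false) ∧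
    ∃ r : Sym2 V → ℕ, Bfeas G A B n b r ∧
      a = wsum (fun e => w e * (r e : ℝ)) G.edgeSet}

/-! ### The integer program `I` -/

/-- Feasibility of `(ρ,σ)` for the integer program. -/
def IPfeas (G : SimpleGraph V) (A B C : Set V) (n : ℕ) (ρ σ : Sym2 V → ℕ) : Prop :=
  (∀ x ∈ A, ∀ y ∈ B, ∀ L : G.Walk x y,
    2 ∣ wkSum (fun e => (σ e : ℤ) + (ρ e : ℤ)) L ∧
    wkSum (fun e => (σ e : ℤ) + (ρ e : ℤ)) L ≥
      2 * ((n : ℤ) - if wkSum (fun e => (ρ e : ℤ)) L = 0 then 1 else 0)) ∧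
  (∀ x ∈ A ∪ B, ∀ y ∈ C, ∀ L : G.Walk x y,
    wkSum (fun e => (ρ e : ℤ)) L ≥ (n : ℤ))

/-- The objective of the integer program. -/
def IPobj (G : SimpleGraph V) (w : Sym2 V → ℝ) (ρ σ : Sym2 V → ℕ) : ℝ :=
  wsum (fun e => w e * ((σ e : ℝ) + (ρ e : ℝ))) G.edgeSet

/-- The optimal value `I` of the integer program. -/
def Ival (G : SimpleGraph V) (w : Sym2 V → ℝ) (A B C : Set V) (n : ℕ) : ℝ :=
  sInf {a | ∃ ρ σ : Sym2 V → ℕ, IPfeas G A B C n ρ σ ∧ a = IPobj G w ρ σ}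

/-! ### The ℓ-intersecting cut problem `M` -/

/-- Feasibility for the `ℓ`-intersecting cut problem with boundary sets
`Γ₀, …, Γ_ℓ` and `C`, for a half-integer valued `ϱ`. -/
def Mfeas (G : SimpleGraph V) (Γ : ℕ → Set V) (ℓ : ℕ) (C : Set V)
    (ϱ : Sym2 V → ℚ) : Prop :=
  (∀ e, ∃ j : ℕ, ϱ e = (j : ℚ) / 2) ∧
  (∀ k k' : ℕ, k ≤ ℓ → k' ≤ ℓ → ∀ x ∈ Γ k, ∀ y ∈ Γ k', ∀ L : G.Walk x y,
    ∃ j : ℕ, wkSum ϱ L = |(k : ℚ) - (k' : ℚ)| + (j : ℚ)) ∧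
  (∀ k : ℕ, k ≤ ℓ → ∀ x ∈ Γ k, ∀ y ∈ C, ∀ L : G.Walk x y,
    ∃ j : ℕ, wkSum ϱ L = (ℓ : ℚ) / 2 + (j : ℚ))

/-- The objective of the `ℓ`-intersecting cut problem. -/
def Mobj (G : SimpleGraph V) (w : Sym2 V → ℝ) (ϱ : Sym2 V → ℚ) : ℝ :=
  wsum (fun e => w e * (ϱ e : ℝ)) G.edgeSet

/-- The optimal value `M` of the `ℓ`-intersecting cut problem. -/
def Mval (G : SimpleGraph V) (w : Sym2 V → ℝ) (Γ : ℕ → Set V) (ℓ : ℕ)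
    (C : Set V) : ℝ :=
  sInf {a | ∃ ϱ : Sym2 V → ℚ, Mfeas G Γ ℓ C ϱ ∧ a = Mobj G w ϱ}

/-- The complementary reduced graph `G^c`: the edges of `G` not lying entirely
inside `V'`. -/
def reducedGraph (G : SimpleGraph V) (V' : Set V) : SimpleGraph V where
  Adj x y := G.Adj x y ∧ ¬ (x ∈ V' ∧ y ∈ V')
  symm := by
    constructor
    intro x y h
    exact ⟨h.1.symm, fun hc => h.2 ⟨hc.2, hc.1⟩⟩
  loopless := by
    constructor
    intro x h
    exact G.loopless.irrefl x h.1

end RTN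

/-!
The witness for `B(b∘q) ≤ Q(q)` is `r(e) = d(q(x), q(y))` itself. On an edge, the Hamming distance
of the singlet patterns is at most `2 d`, because a singlet lost in `p ⊔ q` merges two blocks.
Along an `A`–`B` path `L`, `r(L) ≡ #(q_A) + #(q_B) = 2n (mod 2)` and, by the triangle inequality,
`r(L) ≥ d(q_A, q_B) = 2n - 2`; if some vertex `v` of `L` carries a singlet, splitting `L` at `v`
gives `r(L) ≥ d(q_A, q(v)) + d(q(v), q_B) ≥ 2n`.

Both inequalities on block counts are dimension counts over `𝔽₂`: the functions constant on the
blocks of `s` form a space of dimension `#(s)`, and for `p ≤ a, b` the spaces of `a` and `b` lie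
in that of `p` and meet in that of `a ⊔ b`. When `p` has a singlet and `a ⊇ q_A`, `b ⊇ q_B`,
whose blocks are pairs, the indicator of the singlet has odd sum while the functions of `a` and
`b` have even sums, so the inclusion is strict.
-/

namespace RTN

section Partitions

variable {α : Type*}

lemma nb_le_nb_of_le [Finite α] {p a : Setoid α} (h : p ≤ a) : nb a ≤ nb p := by
  have hsurj : Function.Surjective (Setoid.map_of_le h) := by
    rintro ⟨x⟩
    exact ⟨Quotient.mk p x, rfl⟩
  unfold nb
  exact_mod_cast Nat.card_le_card_of_surjective _ hsurj

lemma nb_ker_of_surjective {β : Type*} {f : α → β} (hf : Function.Surjective f) :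
    nb (Setoid.ker f) = Nat.card β := by
  rw [nb, Nat.card_congr (Setoid.quotientKerEquivOfSurjective f hf)]

lemma nb_le_one_of_total [Finite α] {s : Setoid α} (h : ∀ x y, s x y) : nb s ≤ 1 := by
  have : Subsingleton (Quotient s) := ⟨by rintro ⟨x⟩ ⟨y⟩; exact Quotient.sound (h x y)⟩
  unfold nb
  exact_mod_cast Finite.card_le_one_iff_subsingleton.mpr this

lemma pdist_self (p : Setoid α) : pdist p p = 0 := by
  rw [pdist, sup_idem]
  ring

lemma pdist_nonneg [Finite α] (p q : Setoid α) : 0 ≤ pdist p q := by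
  have := nb_le_nb_of_le (le_sup_left : p ≤ p ⊔ q)
  have := nb_le_nb_of_le (le_sup_right : q ≤ p ⊔ q)
  unfold pdist
  omega

lemma blockSize_ker {β : Type*} (f : α → β) (x : α) :
    blockSize (Setoid.ker f) x = Nat.card {y // f y = f x} :=
  Nat.card_congr (Equiv.subtypeEquivRight fun _ => eq_comm)

lemma blockSize_eq_one_of_isSinglet {s : Setoid α} {x : α} (h : IsSinglet s x) :
    blockSize s x = 1 :=
  Nat.card_eq_one_iff_unique.mpr
    ⟨⟨fun y y' => Subtype.ext ((h y y.2).trans (h y' y'.2).symm)⟩, ⟨⟨x, s.refl x⟩⟩⟩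

lemma isSinglet_bot {κ : Type*} (k : κ) : IsSinglet (⊥ : Setoid κ) k := fun y hy => by
  rw [Setoid.bot_def] at hy
  exact hy.symm

lemma card_fiber_of_bijective {γ ι : Type*} (F : γ × ι → γ)
    (hF : ∀ i, Function.Bijective fun k => F (k, i)) (c : γ) :
    Nat.card {z // F z = c} = Nat.card ι :=
  Nat.card_congr
    { toFun := fun z => z.1.2
      invFun := fun i => ⟨((Equiv.ofBijective _ (hF i)).symm c, i),
        (Equiv.ofBijective _ (hF i)).apply_symm_apply c⟩
      left_inv := by
        rintro ⟨⟨k, i⟩, rfl⟩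
        exact Subtype.ext (Prod.ext ((Equiv.ofBijective _ (hF i)).symm_apply_apply k) rfl)
      right_inv := fun _ => rfl }

lemma blockSize_ker_comp_equiv {α γ ι : Type*} (e : α ≃ γ × ι) (F : γ × ι → γ)
    (hF : ∀ i, Function.Bijective fun k => F (k, i)) (u : α) :
    blockSize (Setoid.ker (F ∘ e)) u = Nat.card ι := by
  rw [blockSize_ker, ← card_fiber_of_bijective F hF (F (e u))]
  exact Nat.card_congr (e.subtypeEquiv fun _ => Iff.rfl)

variable (K : Type*) [Field K]

def blockFunctions (s : Setoid α) : Submodule K (α → K) :=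
  LinearMap.range (LinearMap.funLeft K K (Quotient.mk s))

variable {K}

lemma mem_blockFunctions {s : Setoid α} {f : α → K} :
    f ∈ blockFunctions K s ↔ s ≤ Setoid.ker f := by
  constructor
  · rintro ⟨φ, rfl⟩ x y hxy
    exact congrArg φ (Quotient.sound hxy)
  · intro h
    exact ⟨Quotient.lift f h, rfl⟩

lemma blockFunctions_mono {s t : Setoid α} (h : s ≤ t) :
    blockFunctions K t ≤ blockFunctions K s :=
  fun _ hf => mem_blockFunctions.mpr (h.trans (mem_blockFunctions.mp hf))

lemma blockFunctions_sup (s t : Setoid α) :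
    blockFunctions K (s ⊔ t) = blockFunctions K s ⊓ blockFunctions K t := by
  ext f
  simp only [Submodule.mem_inf, mem_blockFunctions, sup_le_iff]

lemma finrank_blockFunctions [Fintype α] (s : Setoid α) :
    (Module.finrank K (blockFunctions K s) : ℤ) = nb s := by
  have hinj := LinearMap.funLeft_injective_of_surjective K K _ (Quotient.mk_surjective (s := s))
  rw [blockFunctions, LinearMap.finrank_range_of_inj hinj, Module.finrank_fintype_fun_eq_card,
    nb, Nat.card_eq_fintype_card]

lemma nb_add_nb_eq [Fintype α] (a b : Setoid α) :
    nb a + nb b =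
      Module.finrank K ↥(blockFunctions K a ⊔ blockFunctions K b) + nb (a ⊔ b) := by
  rw [← finrank_blockFunctions (K := K) a, ← finrank_blockFunctions (K := K) b,
    ← finrank_blockFunctions (K := K) (a ⊔ b), blockFunctions_sup]
  exact_mod_cast (Submodule.finrank_sup_add_finrank_inf_eq _ _).symm

lemma nb_add_nb_le [Fintype α] {p a b : Setoid α} (hpa : p ≤ a) (hpb : p ≤ b) :
    nb a + nb b ≤ nb p + nb (a ⊔ b) := by
  have hle : Module.finrank (ZMod 2) ↥(blockFunctions (ZMod 2) a ⊔ blockFunctions _ b) ≤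
      Module.finrank (ZMod 2) (blockFunctions (ZMod 2) p) :=
    Submodule.finrank_mono (sup_le (blockFunctions_mono hpa) (blockFunctions_mono hpb))
  have := finrank_blockFunctions (K := ZMod 2) p
  rw [nb_add_nb_eq (K := ZMod 2)]
  omega

lemma sum_eq_zero_of_even_blockSize [Fintype α] {s : Setoid α}
    (hs : ∀ x, Even (blockSize s x)) {f : α → ZMod 2} (hf : s ≤ Setoid.ker f) :
    ∑ x, f x = 0 := by
  rw [← Finset.sum_fiberwise Finset.univ (Quotient.mk s) f]
  refine Finset.sum_eq_zero fun c _ => ?_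
  induction c using Quotient.ind with | _ x => ?_
  have hblock : ∀ y ∈ Finset.univ.filter (fun y => Quotient.mk s y = Quotient.mk s x),
      f y = f x := fun y hy => hf (Quotient.exact (Finset.mem_filter.mp hy).2)
  have hcard : (Finset.univ.filter (fun y => Quotient.mk s y = Quotient.mk s x)).card =
      blockSize s x := by
    rw [blockSize, Nat.card_eq_fintype_card, Fintype.card_subtype]
    congr 1
    ext y
    simp only [Finset.mem_filter, Finset.mem_univ, true_and, Quotient.eq]
    exact ⟨s.symm, s.symm⟩
  rw [Finset.sum_congr rfl hblock, Finset.sum_const, hcard, nsmul_eq_mul,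
    (ZMod.natCast_eq_zero_iff_even.mpr (hs x)), zero_mul]

lemma nb_add_nb_lt [Fintype α] {p a b s t : Setoid α} (hpa : p ≤ a) (hpb : p ≤ b)
    (hsa : s ≤ a) (htb : t ≤ b) (hs : ∀ x, Even (blockSize s x))
    (ht : ∀ x, Even (blockSize t x)) {u : α} (hu : IsSinglet p u) :
    nb a + nb b < nb p + nb (a ⊔ b) := by
  let δ : α → ZMod 2 := fun x => if x = u then 1 else 0
  have hδ : δ ∈ blockFunctions (ZMod 2) p := by
    refine mem_blockFunctions.mpr fun x y hxy => ?_
    have : x = u ↔ y = u := ⟨fun h => hu y (h ▸ hxy), fun h => hu x (h ▸ p.symm hxy)⟩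
    simp only [Setoid.ker_def, δ, this]
  have hδ_sum : ∑ x, δ x = 1 := by simp [δ]
  have hlt : blockFunctions (ZMod 2) a ⊔ blockFunctions _ b < blockFunctions _ p := by
    refine lt_of_le_of_ne (sup_le (blockFunctions_mono hpa) (blockFunctions_mono hpb)) ?_
    intro heq
    obtain ⟨f, hf, g, hg, hfg⟩ := Submodule.mem_sup.mp (heq ▸ hδ)
    have hf0 := sum_eq_zero_of_even_blockSize hs (hsa.trans (mem_blockFunctions.mp hf))
    have hg0 := sum_eq_zero_of_even_blockSize ht (htb.trans (mem_blockFunctions.mp hg))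
    have := congrArg (fun h : α → ZMod 2 => ∑ x, h x) hfg
    simp only [Pi.add_apply, Finset.sum_add_distrib, hf0, hg0, hδ_sum] at this
    exact zero_ne_one this
  have := Submodule.finrank_lt_finrank_of_lt hlt
  have := finrank_blockFunctions (K := ZMod 2) p
  rw [nb_add_nb_eq (K := ZMod 2)]
  omega

lemma pdist_triangle [Fintype α] (x y z : Setoid α) : pdist x z ≤ pdist x y + pdist y z := by
  have h := nb_add_nb_le (le_sup_right : y ≤ x ⊔ y) (le_sup_left : y ≤ y ⊔ z)
  have hxz : nb (x ⊔ y ⊔ (y ⊔ z)) ≤ nb (x ⊔ z) :=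
    nb_le_nb_of_le (sup_le_sup le_sup_left le_sup_right)
  unfold pdist
  omega

lemma card_add_two_mul_card_le {X Y : Type*} [Fintype X] [Fintype Y] {π : X → Y}
    (hπ : Function.Surjective π) (T : Finset X)
    (hT : ∀ x ∈ T, ∃ x', x' ≠ x ∧ π x' = π x) :
    T.card + 2 * Fintype.card Y ≤ 2 * Fintype.card X := by
  have hfiber : ∀ y,
      (T.filter (π · = y)).card + 2 ≤ 2 * (Finset.univ.filter (π · = y)).card := by
    intro y
    have hsub : (T.filter (π · = y)).card ≤ (Finset.univ.filter (π · = y)).card :=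
      Finset.card_le_card (Finset.filter_subset_filter _ (Finset.subset_univ T))
    rcases (T.filter (π · = y)).eq_empty_or_nonempty with hempty | ⟨x, hx⟩
    · obtain ⟨x, rfl⟩ := hπ y
      have : 0 < (Finset.univ.filter (π · = π x)).card :=
        Finset.card_pos.mpr ⟨x, by simp⟩
      rw [hempty, Finset.card_empty]
      omega
    · rw [Finset.mem_filter] at hx
      obtain ⟨x', hne, hx'⟩ := hT x hx.1
      have : 2 ≤ (Finset.univ.filter (π · = y)).card := by
        rw [← Finset.card_pair hne]
        exact Finset.card_le_card fun z hz => by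
          rcases Finset.mem_insert.mp hz with rfl | hz
          · simp [hx', hx.2]
          · simp [Finset.mem_singleton.mp hz, hx.2]
      omega
  have hTsum := Finset.card_eq_sum_card_fiberwise (f := π) (s := T) (t := Finset.univ)
    fun x _ => Finset.mem_univ _
  have hXsum := Finset.card_eq_sum_card_fiberwise (f := π) (s := Finset.univ) (t := Finset.univ)
    fun x _ => Finset.mem_univ _
  rw [Finset.card_univ] at hXsum
  have := Finset.sum_le_sum fun y (_ : y ∈ Finset.univ) => hfiber y
  rw [Finset.sum_add_distrib, Finset.sum_const, Finset.card_univ, smul_eq_mul,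
    ← Finset.mul_sum] at this
  omega

/-- A singlet of `p` that stops being a singlet in the coarser `P` is merged with another block
of `p`, so each block of `P` absorbing `j` such singlets costs at least `j / 2` blocks. -/
lemma card_isSinglet_not_isSinglet_le [Fintype α] {p P : Setoid α} (h : p ≤ P) :
    ((Finset.univ.filter fun k => IsSinglet p k ∧ ¬ IsSinglet P k).card : ℤ) ≤
      2 * (nb p - nb P) := by
  set D := Finset.univ.filter fun k => IsSinglet p k ∧ ¬ IsSinglet P k
  have hinj : Set.InjOn (Quotient.mk p) D := fun k hk k' _ hkk' =>
    ((Finset.mem_filter.mp hk).2.1 k' (Quotient.exact hkk')).symm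
  have hsurj : Function.Surjective (Setoid.map_of_le h) := by
    rintro ⟨x⟩
    exact ⟨Quotient.mk p x, rfl⟩
  have key := card_add_two_mul_card_le hsurj (D.image (Quotient.mk p)) ?_
  · rw [Finset.card_image_of_injOn hinj] at key
    unfold nb
    rw [Nat.card_eq_fintype_card, Nat.card_eq_fintype_card]
    omega
  · simp only [Finset.mem_image]
    rintro _ ⟨k, hk, rfl⟩
    obtain ⟨-, hkp, hkP⟩ := Finset.mem_filter.mp hk
    obtain ⟨y, hy, hyk⟩ : ∃ y, P k y ∧ y ≠ k := by
      simpa [IsSinglet] using hkP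
    exact ⟨Quotient.mk p y, fun hc => hyk (hkp y (Quotient.exact hc.symm)),
      Quotient.sound (P.symm hy)⟩

lemma ham_bvec_le_two_mul_pdist [Fintype α] (p q : Setoid α) :
    ham (bvec p) (bvec q) ≤ 2 * pdist p q := by
  have hp := card_isSinglet_not_isSinglet_le (le_sup_left : p ≤ p ⊔ q)
  have hq := card_isSinglet_not_isSinglet_le (le_sup_right : q ≤ p ⊔ q)
  have hpoint : ∀ k, (if bvec p k = bvec q k then (0 : ℤ) else 1) ≤
      (if IsSinglet p k ∧ ¬ IsSinglet (p ⊔ q) k then 1 else 0) +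
        (if IsSinglet q k ∧ ¬ IsSinglet (p ⊔ q) k then 1 else 0) := by
    intro k
    have hpq : IsSinglet (p ⊔ q) k → IsSinglet p k ∧ IsSinglet q k := fun h =>
      ⟨fun y hy => h y (le_sup_left (b := q) hy), fun y hy => h y (le_sup_right (a := p) hy)⟩
    by_cases h1 : IsSinglet p k <;> by_cases h2 : IsSinglet q k <;>
      by_cases h3 : IsSinglet (p ⊔ q) k <;> simp_all [bvec]
  have := Finset.sum_le_sum fun k (_ : k ∈ Finset.univ) => hpoint k
  simp only [Finset.sum_add_distrib, Finset.sum_boole] at this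
  unfold ham pdist
  linarith

end Partitions

section Orbits

open Equiv Equiv.Perm

variable {α β : Type*}

lemma orbitSetoid_le {g : Perm α} {s : Setoid α} (h : ∀ x, s x (g x)) :
    orbitSetoid g ≤ s := by
  rintro x _ ⟨k, rfl⟩
  induction k using Int.induction_on with
  | zero => exact s.refl x
  | succ k ih =>
    rw [add_comm, zpow_one_add, Perm.mul_apply]
    exact s.trans ih (h _)
  | pred k ih =>
    have hstep := h ((g ^ (-(k : ℤ) - 1)) x)
    rw [← Perm.mul_apply, ← zpow_one_add, show 1 + (-(k : ℤ) - 1) = -k by ring] at hstep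
    exact s.trans ih (s.symm hstep)

lemma prodCongr_refl_zpow_apply (σ : Perm β) (k : ℤ) (x : α × β) :
    (prodCongr (Equiv.refl α) σ ^ k) x = (x.1, (σ ^ k) x.2) := by
  have hhom : ∀ τ τ' : Perm β, prodCongr (Equiv.refl α) (τ * τ') =
      prodCongr (Equiv.refl α) τ * prodCongr (Equiv.refl α) τ' := fun _ _ => rfl
  let φ : Perm β →* Perm (α × β) :=
    { toFun := prodCongr (Equiv.refl α), map_one' := rfl, map_mul' := hhom }
  exact congrArg (· x) (map_zpow φ σ k).symm

lemma sameCycle_prodCongr_refl_iff {σ : Perm β} {x y : α × β} :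
    SameCycle (prodCongr (Equiv.refl α) σ) x y ↔ x.1 = y.1 ∧ σ.SameCycle x.2 y.2 := by
  simp only [SameCycle, prodCongr_refl_zpow_apply, Prod.ext_iff]
  exact ⟨fun ⟨k, h1, h2⟩ => ⟨h1, k, h2⟩, fun ⟨h1, k, h2⟩ => ⟨k, h1, h2⟩⟩

lemma sameCycle_permCongr_iff (e : α ≃ β) {σ : Perm α} {x y : β} :
    (e.permCongr σ).SameCycle x y ↔ σ.SameCycle (e.symm x) (e.symm y) := by
  have hpow : ∀ k : ℤ, e.permCongr σ ^ k = e.permCongr (σ ^ k) := fun k => by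
    rw [← e.permCongrHom_coe, map_zpow]
  simp only [SameCycle, hpow, permCongr_apply, ← e.eq_symm_apply]

lemma sameCycle_finRotate {N : ℕ} (a b : Fin N) : (finRotate N).SameCycle a b := by
  rcases lt_or_ge N 2 with hN | hN
  · exact Eq.sameCycle (Fin.ext (by omega)) _
  · have hsupp : ∀ c, finRotate N c ≠ c := fun c => by
      rw [← mem_support, support_finRotate_of_le hN]
      exact Finset.mem_univ c
    exact (isCycle_finRotate_of_le hN).sameCycle (hsupp a) (hsupp b)

lemma qc_eq_ker {α β : Type*} {g₀ g : Perm α} {f : Quotient (orbitSetoid g₀) → β}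
    (h : ∀ x y, g.SameCycle x y ↔ f (Quotient.mk _ x) = f (Quotient.mk _ y)) :
    qc g₀ g = Setoid.ker f := by
  have hle : orbitSetoid g ⊔ orbitSetoid g₀ ≤ Setoid.ker (f ∘ Quotient.mk _) :=
    sup_le (fun x y hxy => (h x y).1 hxy) (fun x y hxy => congrArg f (Quotient.sound hxy))
  refine Setoid.ext fun u v => ⟨?_, ?_⟩
  · rintro ⟨x, y, rfl, rfl, hxy⟩
    exact hle hxy
  · induction u, v using Quotient.inductionOn₂ with | _ x y => ?_
    exact fun hxy => ⟨x, y, rfl, rfl, le_sup_left (b := orbitSetoid g₀) ((h x y).2 hxy)⟩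

end Orbits

section Boundary

open Equiv.Perm

variable (n m : ℕ) (hm : m % 2 = 0)

def halfIndex (x : Fin n × Fin m) : Fin n × Fin 2 := (x.1, ((halfEquiv m hm).symm x.2).1)

/-- The `g_A`-block of the `P(X)`-block `(k, i)`: `γ` moves the half `i = 1` (`ℓ ≥ m / 2`) of
block `k` into block `k + 1`. -/
def twist (z : Fin n × Fin 2) : Fin n := if z.2 = 1 then finRotate n z.1 else z.1

variable {n m}

lemma halfEquiv_symm_fst_eq_one_iff (ℓ : Fin m) :
    ((halfEquiv m hm).symm ℓ).1 = 1 ↔ m / 2 ≤ (ℓ : ℕ) := by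
  have hpos : 0 < m / 2 := by have := ℓ.2; omega
  rw [Fin.ext_iff]
  simp [halfEquiv, finProdFinEquiv_symm_apply, Fin.divNat]
  rw [Nat.div_eq_iff hpos]
  omega

lemma halfIndex_surjective (hm2 : 2 ≤ m) : Function.Surjective (halfIndex n m hm) := fun z =>
  ⟨(z.1, halfEquiv m hm (z.2, ⟨0, by omega⟩)), by simp [halfIndex]⟩

lemma gamma_fst (x : Fin n × Fin m) : (gamma n m x).1 = twist n (halfIndex n m hm x) := by
  by_cases h : m / 2 ≤ (x.2 : ℕ) <;>
    simp [gamma, twist, halfIndex, h, halfEquiv_symm_fst_eq_one_iff, -finRotate_apply]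

lemma sameCycle_Xel_iff {x y : Fin n × Fin m} :
    (Xel n m hm).SameCycle x y ↔ halfIndex n m hm x = halfIndex n m hm y := by
  simp [Xel, halfIndex, sameCycle_prodCongr_refl_iff, sameCycle_permCongr_iff,
    sameCycle_finRotate, Prod.ext_iff]

lemma sameCycle_gB_iff {x y : Fin n × Fin m} : (gB n m).SameCycle x y ↔ x.1 = y.1 := by
  simp [gB, sameCycle_prodCongr_refl_iff, sameCycle_finRotate]

lemma sameCycle_gA_iff {x y : Fin n × Fin m} :
    (gA n m).SameCycle x y ↔ (gamma n m x).1 = (gamma n m y).1 := by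
  have := sameCycle_conj (g := (gamma n m)⁻¹) (f := gB n m) (x := x) (y := y)
  rw [inv_inv] at this
  rw [gA, this, sameCycle_gB_iff]

def blockIndex (hm2 : 2 ≤ m) : BX n m hm ≃ Fin n × Fin 2 :=
  (Quotient.congrRight fun _ _ => sameCycle_Xel_iff hm).trans
    (Setoid.quotientKerEquivOfSurjective _ (halfIndex_surjective hm hm2))

lemma qBel_eq_ker (hm2 : 2 ≤ m) : qBel n m hm = Setoid.ker fun u => (blockIndex hm hm2 u).1 :=
  qc_eq_ker fun _ _ => sameCycle_gB_iff

lemma qAel_eq_ker (hm2 : 2 ≤ m) :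
    qAel n m hm = Setoid.ker fun u => twist n (blockIndex hm hm2 u) :=
  qc_eq_ker fun x y => by rw [sameCycle_gA_iff, gamma_fst hm, gamma_fst hm]; rfl

lemma twist_bijective (i : Fin 2) : Function.Bijective fun k => twist n (k, i) := by
  by_cases h : i = 1
  · simpa [twist, h] using (finRotate n).bijective
  · simp [twist, h]

lemma nb_qBel (hm2 : 2 ≤ m) : nb (qBel n m hm) = n := by
  rw [qBel_eq_ker hm hm2, nb_ker_of_surjective, Nat.card_eq_fintype_card, Fintype.card_fin]
  exact fun k => ⟨(blockIndex hm hm2).symm (k, 0), by simp⟩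

lemma nb_qAel (hm2 : 2 ≤ m) : nb (qAel n m hm) = n := by
  rw [qAel_eq_ker hm hm2, nb_ker_of_surjective, Nat.card_eq_fintype_card, Fintype.card_fin]
  exact fun k => ⟨(blockIndex hm hm2).symm (k, 0), by simp [twist]⟩

lemma blockSize_qBel (hm2 : 2 ≤ m) (u : BX n m hm) : blockSize (qBel n m hm) u = 2 := by
  rw [qBel_eq_ker hm hm2]
  exact (blockSize_ker_comp_equiv (blockIndex hm hm2) Prod.fst
    (fun _ => Function.bijective_id) u).trans (Nat.card_fin 2)

lemma blockSize_qAel (hm2 : 2 ≤ m) (u : BX n m hm) : blockSize (qAel n m hm) u = 2 := by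
  rw [qAel_eq_ker hm hm2]
  exact (blockSize_ker_comp_equiv (blockIndex hm hm2) (twist n) twist_bijective u).trans
    (Nat.card_fin 2)

/-- The blocks of `q_A` and `q_B` alternate along the cycle
`(0,0) ~B (0,1) ~A (1,0) ~B (1,1) ~A (2,0) ~ …`, which visits every block of `P(X)`. -/
lemma qAel_sup_qBel_total (hm2 : 2 ≤ m) (u v : BX n m hm) :
    (qAel n m hm ⊔ qBel n m hm) u v := by
  set e := blockIndex hm hm2
  set S := qAel n m hm ⊔ qBel n m hm
  have hA : ∀ u v, twist n (e u) = twist n (e v) → S u v := fun u v h =>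
    le_sup_left (b := qBel n m hm) (by rw [qAel_eq_ker hm hm2]; exact h)
  have hB : ∀ u v, (e u).1 = (e v).1 → S u v := fun u v h =>
    le_sup_right (a := qAel n m hm) (by rw [qBel_eq_ker hm hm2]; exact h)
  let base : Fin n → BX n m hm := fun k => e.symm (k, 0)
  have hstep : ∀ k, S (base k) (base (finRotate n k)) := fun k =>
    S.trans (hB _ (e.symm (k, 1)) (by simp [base])) (hA _ _ (by simp [base, twist]))
  have hbase : ∀ k k', S (base k) (base k') := fun k k' =>
    orbitSetoid_le (s := Setoid.comap base S) hstep (sameCycle_finRotate k k')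
  have hu : S u (base (e u).1) := hB _ _ (by simp [base])
  have hv : S v (base (e v).1) := hB _ _ (by simp [base])
  exact S.trans hu (S.trans (hbase _ _) (S.symm hv))

lemma not_isSinglet_qAel (hm2 : 2 ≤ m) (u : BX n m hm) : ¬ IsSinglet (qAel n m hm) u :=
  fun h => by
  simpa [blockSize_qAel hm hm2] using blockSize_eq_one_of_isSinglet h

lemma not_isSinglet_qBel (hm2 : 2 ≤ m) (u : BX n m hm) : ¬ IsSinglet (qBel n m hm) u :=
  fun h => by
  simpa [blockSize_qBel hm hm2] using blockSize_eq_one_of_isSinglet h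

lemma two_mul_sub_two_le_pdist_qAel_qBel (hm2 : 2 ≤ m) :
    2 * (n : ℤ) - 2 ≤ pdist (qAel n m hm) (qBel n m hm) := by
  have := nb_le_one_of_total (qAel_sup_qBel_total (n := n) hm hm2)
  rw [pdist, nb_qAel hm hm2, nb_qBel hm hm2]
  omega

lemma two_mul_le_pdist_add_pdist_of_isSinglet (hm2 : 2 ≤ m) (p : Setoid (BX n m hm))
    {u : BX n m hm} (hu : IsSinglet p u) :
    2 * (n : ℤ) ≤ pdist (qAel n m hm) p + pdist p (qBel n m hm) := by
  have hlt := nb_add_nb_lt (le_sup_right : p ≤ qAel n m hm ⊔ p)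
    (le_sup_left : p ≤ p ⊔ qBel n m hm) le_sup_left le_sup_right
    (fun x => by rw [blockSize_qAel hm hm2]; exact even_two)
    (fun x => by rw [blockSize_qBel hm hm2]; exact even_two) hu
  have hle : qAel n m hm ⊔ qBel n m hm ≤ qAel n m hm ⊔ p ⊔ (p ⊔ qBel n m hm) :=
    sup_le_sup le_sup_left le_sup_right
  have htot := nb_le_one_of_total fun u v => hle (qAel_sup_qBel_total hm hm2 u v)
  rw [pdist, pdist, nb_qAel hm hm2, nb_qBel hm hm2]
  omega

end Boundary

section Walks

variable {V κ : Type*} {G : SimpleGraph V}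

lemma wkSum_cons {β : Type*} [AddCommMonoid β] (f : Sym2 V → β) {x y z : V} (h : G.Adj x y)
    (L : G.Walk y z) : wkSum f (.cons h L) = f s(x, y) + wkSum f L := by
  simp [wkSum]

lemma wkSum_append {β : Type*} [AddCommMonoid β] (f : Sym2 V → β) {x y z : V}
    (L₁ : G.Walk x y) (L₂ : G.Walk y z) :
    wkSum f (L₁.append L₂) = wkSum f L₁ + wkSum f L₂ := by
  simp [wkSum]

lemma two_dvd_wkSum_partEZ_add (q : V → Setoid κ) {x y : V} (L : G.Walk x y) :
    2 ∣ wkSum (partEZ q) L + nb (q x) + nb (q y) := by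
  induction L with
  | nil => exact ⟨nb (q _), by simp [wkSum]; ring⟩
  | @cons a b c h L ih =>
    rw [wkSum_cons]
    have : 2 ∣ pdist (q a) (q b) + nb (q a) + nb (q b) :=
      ⟨nb (q a) + nb (q b) - nb (q a ⊔ q b), by unfold pdist; ring⟩
    change 2 ∣ pdist (q a) (q b) + _ + _ + _
    omega

variable [Fintype κ]

lemma pdist_le_wkSum_partEZ (q : V → Setoid κ) {x y : V} (L : G.Walk x y) :
    pdist (q x) (q y) ≤ wkSum (partEZ q) L := by
  induction L with
  | nil => simp [wkSum, pdist_self]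
  | @cons a b c h L ih =>
    rw [wkSum_cons]
    have := pdist_triangle (q a) (q b) (q c)
    change _ ≤ pdist (q a) (q b) + _
    omega

lemma pdist_add_pdist_le_wkSum_partEZ (q : V → Setoid κ) {x y v : V} (L : G.Walk x y)
    (hv : v ∈ L.support) :
    pdist (q x) (q v) + pdist (q v) (q y) ≤ wkSum (partEZ q) L := by
  rw [← L.take_spec hv, wkSum_append]
  exact add_le_add (pdist_le_wkSum_partEZ q _) (pdist_le_wkSum_partEZ q _)

def partENat (q : V → Setoid κ) (e : Sym2 V) : ℕ := (partEZ q e).toNat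

lemma natCast_partENat (q : V → Setoid κ) (e : Sym2 V) : (partENat q e : ℤ) = partEZ q e := by
  induction e using Sym2.ind with
  | _ x y => exact Int.toNat_of_nonneg (pdist_nonneg (q x) (q y))

end Walks

lemma exists_boundary_config {V κ : Type*} {A B C : Set V} (hbdy : Bdy A B C)
    (q₁ q₂ : Setoid κ) :
    ∃ q : V → Setoid κ,
      (∀ v ∈ A, q v = q₁) ∧ (∀ v ∈ B, q v = q₂) ∧ (∀ v ∈ C, q v = ⊥) := by
  refine ⟨fun v => if v ∈ A then q₁ else if v ∈ B then q₂ else ⊥, fun v hv => if_pos hv,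
    fun v hv => ?_, fun v hv => ?_⟩
  · simp [hv, Set.disjoint_right.mp hbdy.1 hv]
  · simp [Set.disjoint_right.mp hbdy.2.1 hv, Set.disjoint_right.mp hbdy.2.2 hv]

section Programs

variable {V : Type*} [Fintype V] (G : SimpleGraph V) {n m : ℕ} (hm : m % 2 = 0)

lemma bfeas_partENat (hm2 : 2 ≤ m) {A B : Set V} (q : V → Setoid (BX n m hm))
    (hqA : ∀ v ∈ A, q v = qAel n m hm) (hqB : ∀ v ∈ B, q v = qBel n m hm) :
    Bfeas G A B n (fun v => bvec (q v)) (partENat q) := by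
  have hcast : (fun e => (partENat q e : ℤ)) = partEZ q := funext (natCast_partENat q)
  refine ⟨fun x hx y hy L => ?_, fun x y _ => ?_⟩
  · rw [hcast]
    have hpar := two_dvd_wkSum_partEZ_add q L
    rw [hqA x hx, hqB y hy, nb_qAel hm hm2, nb_qBel hm hm2] at hpar
    refine ⟨by omega, ?_⟩
    split_ifs with hall
    · have := pdist_le_wkSum_partEZ q L
      rw [hqA x hx, hqB y hy] at this
      have := two_mul_sub_two_le_pdist_qAel_qBel (n := n) hm hm2
      omega
    · push Not at hall
      obtain ⟨v, hv, k, hk⟩ := hall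
      have hsing : IsSinglet (q v) k := by
        by_contra h
        exact hk (if_neg h)
      have := pdist_add_pdist_le_wkSum_partEZ q L hv
      rw [hqA x hx, hqB y hy] at this
      have := two_mul_le_pdist_add_pdist_of_isSinglet hm hm2 (q v) hsing
      omega
  · rw [natCast_partENat, ge_iff_le, Int.ceil_le, div_le_iff₀ two_pos]
    exact_mod_cast (ham_bvec_le_two_mul_pdist (q x) (q y)).trans_eq (mul_comm _ _)

variable {G}

lemma wsum_partENat (w : Sym2 V → ℝ) {κ : Type*} [Fintype κ] (q : V → Setoid κ) :
    wsum (fun e => w e * (partENat q e : ℝ)) G.edgeSet = Qenergy G w q := by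
  simp only [Qenergy, ← natCast_partENat, Int.cast_natCast]

lemma wsum_nonneg {w : Sym2 V → ℝ} (hw : ∀ e, 0 ≤ w e) (r : Sym2 V → ℕ)
    (S : Set (Sym2 V)) :
    0 ≤ wsum (fun e => w e * (r e : ℝ)) S :=
  Finset.sum_nonneg fun e _ => mul_nonneg (hw e) (Nat.cast_nonneg _)

end Programs

end RTN

theorem Q_ge_B_general {V : Type*} [Fintype V] (G : SimpleGraph V)
    (w : Sym2 V → ℝ) (hw : ∀ e, 0 ≤ w e) (A B C : Set V) (hbdy : RTN.Bdy A B C)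
    {n m : ℕ} (hm2 : 2 ≤ m) (hm : m % 2 = 0) :
    (∀ q : V → Setoid (RTN.BX n m hm),
      (∀ v ∈ A, q v = RTN.qAel n m hm) → (∀ v ∈ B, q v = RTN.qBel n m hm) →
      (∀ v ∈ C, q v = ⊥) →
      RTN.Qenergy G w q ≥ RTN.BvalAt G w A B n (fun v => RTN.bvec (q v))) ∧
    RTN.Qval G w A B C (RTN.qAel n m hm) (RTN.qBel n m hm) ≥
      RTN.Bval (RTN.BX n m hm) G w A B C n := by
  open RTN in
  refine ⟨fun q hqA hqB _ => ?_, ?_⟩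
  · exact csInf_le ⟨0, by rintro _ ⟨r, -, rfl⟩; exact wsum_nonneg hw r _⟩
      ⟨partENat q, bfeas_partENat G hm hm2 q hqA hqB, (wsum_partENat w q).symm⟩
  obtain ⟨q₀, hq₀⟩ := exists_boundary_config hbdy (qAel n m hm) (qBel n m hm)
  refine le_csInf ⟨_, q₀, hq₀.1, hq₀.2.1, hq₀.2.2, rfl⟩ ?_
  rintro _ ⟨q, hqA, hqB, hqC, rfl⟩
  have hAB : ∀ v ∈ A ∪ B, ∀ k, bvec (q v) k = true := by
    rintro v (hv | hv) k
    · simp [bvec, hqA v hv, not_isSinglet_qAel hm hm2 k]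
    · simp [bvec, hqB v hv, not_isSinglet_qBel hm hm2 k]
  have hC : ∀ v ∈ C, ∀ k, bvec (q v) k = false := fun v hv k => by
    simp [bvec, hqC v hv, isSinglet_bot k]
  exact csInf_le ⟨0, by rintro _ ⟨b, -, -, r, -, rfl⟩; exact wsum_nonneg hw r _⟩
    ⟨_, hAB, hC, partENat q, bfeas_partENat G hm hm2 q hqA hqB, (wsum_partENat w q).symm⟩

/-- For every admissible `q : V → P_{2n}` one has `Q(q) ≥ B(b∘q)`,
where `(b∘q)(v) = b(q(v))` is the induced Boolean configuration; consequently `Q ≥ B`. -/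
theorem Q_ge_B {V : Type*} [Fintype V] (G : SimpleGraph V)
    (w : Sym2 V → ℝ) (hw : ∀ e, 0 ≤ w e) (A B C : Set V) (hbdy : RTN.Bdy A B C)
    {n m : ℕ} (hn : 2 ≤ n) (hm2 : 2 ≤ m) (hm : m % 2 = 0) :
    (∀ q : V → Setoid (RTN.BX n m hm),
      (∀ v ∈ A, q v = RTN.qAel n m hm) → (∀ v ∈ B, q v = RTN.qBel n m hm) →
      (∀ v ∈ C, q v = ⊥) →
      RTN.Qenergy G w q ≥ RTN.BvalAt G w A B n (fun v => RTN.bvec (q v))) ∧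
    RTN.Qval G w A B C (RTN.qAel n m hm) (RTN.qBel n m hm) ≥
      RTN.Bval (RTN.BX n m hm) G w A B C n :=
  Q_ge_B_general G w hw A B C hbdy hm2 hm
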